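/- arXiv:2410.19310 — 3 statements merged into one kernel-verified Lean document; each statement's English description precedes it below -/
import Mathlib

section
/- Let X, Y be finite types, p : X → ℝ≥0 a probability mass function, q : X → Y → ℝ≥0 conditional probability mass functions, u : X → Y → ℝ^d conditional vector fields. Define p_t(y) = ∑ x, q x y * p x and, for y with p_t(y) ≠ 0, v(y) = p_t(y)⁻¹ • ∑ x, (q x y * p x) • u x y. Then v(y) is the unique minimizer over w(y) of the objective ∑ y, ∑ x, (p x * q x y) * ‖w y - u x y‖² restricted to points y with p_t(y) ≠ 0; i.e., for any w : Y → ℝ^d, ∑ y, ∑ x, (p x * q x y) * ‖w y - u x y‖² ≥ ∑ y, ∑ x, (p x * q x y) * ‖v y - u x y‖², with equality iff w y = v y for all y with p_t(y) ≠ 0. -/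
open scoped BigOperators NNReal

/-!
For each `y`, the inner sum is the `p x * q x y`-weighted moment of inertia of the points `u x y`
about `w y`. By the König–Huygens identity it equals the moment about the barycenter `v y` plus
`pt y * ‖w y - v y‖ ^ 2`, so the excess of the objective over its value at `v` is a sum of
nonnegative terms that vanishes exactly when `w y = v y` wherever `pt y ≠ 0`. Where `pt y = 0`
all weights vanish, so `v y` is arbitrary there and the identity still holds.
-/

open Finset

/-- König–Huygens (parallel axis) identity. -/
theorem sum_mul_norm_sub_sq_eq_of_sum_smul_eq {ι E : Type*} [Fintype ι]
    [NormedAddCommGroup E] [InnerProductSpace ℝ E] (a : ι → ℝ) (u : ι → E) {v : E}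
    (hv : (∑ i, a i) • v = ∑ i, a i • u i) (w : E) :
    ∑ i, a i * ‖w - u i‖ ^ 2 = ∑ i, a i * ‖v - u i‖ ^ 2 + (∑ i, a i) * ‖w - v‖ ^ 2 := by
  have hcross : ∑ i, a i * inner ℝ (w - v) (v - u i) = 0 := by
    simp_rw [← inner_smul_right, ← inner_sum, smul_sub, sum_sub_distrib, ← sum_smul, hv,
      sub_self, inner_zero_right]
  have hexpand : ∀ i,
      ‖w - u i‖ ^ 2 = ‖w - v‖ ^ 2 + 2 * inner ℝ (w - v) (v - u i) + ‖v - u i‖ ^ 2 := by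
    intro i
    rw [← norm_add_sq_real, sub_add_sub_cancel]
  simp_rw [hexpand, mul_add, sum_add_distrib, mul_left_comm _ (2 : ℝ), ← mul_sum, hcross,
    sum_mul]
  ring

theorem sum_mul_norm_sq_eq_zero_iff {ι E : Type*} [Fintype ι] [NormedAddCommGroup E]
    {c : ι → ℝ} (hc : ∀ i, 0 ≤ c i) (f : ι → E) :
    ∑ i, c i * ‖f i‖ ^ 2 = 0 ↔ ∀ i, c i ≠ 0 → f i = 0 := by
  rw [sum_eq_zero_iff_of_nonneg fun i _ => mul_nonneg (hc i) (sq_nonneg _)]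
  simp only [mem_univ, true_implies, mul_eq_zero, pow_eq_zero_iff two_ne_zero, norm_eq_zero,
    or_iff_not_imp_left]

theorem sum_smul_eq_zero_of_sum_eq_zero {ι E : Type*} [Fintype ι] [AddCommGroup E] [Module ℝ E]
    {a : ι → ℝ} (ha : ∀ i, 0 ≤ a i) (hs : ∑ i, a i = 0) (u : ι → E) :
    ∑ i, a i • u i = 0 := by
  rw [sum_eq_zero_iff_of_nonneg fun i _ => ha i] at hs
  exact sum_eq_zero fun i hi => by rw [hs i hi, zero_smul]

theorem cfm_minimizer_general {d : ℕ} {X Y : Type*} [Fintype X] [Fintype Y]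
    (p : X → ℝ≥0)
    (q : X → Y → ℝ≥0)
    (u : X → Y → EuclideanSpace ℝ (Fin d))
    (pt : Y → ℝ) (hpt : ∀ y, pt y = ∑ x, ((q x y * p x : ℝ≥0) : ℝ))
    (v : Y → EuclideanSpace ℝ (Fin d))
    (hv : ∀ y, pt y ≠ 0 →
      v y = (pt y)⁻¹ • ∑ x, ((q x y * p x : ℝ≥0) : ℝ) • u x y)
    (w : Y → EuclideanSpace ℝ (Fin d)) :
    (∑ y, ∑ x, ((p x * q x y : ℝ≥0) : ℝ) * ‖w y - u x y‖ ^ 2 ≥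
      ∑ y, ∑ x, ((p x * q x y : ℝ≥0) : ℝ) * ‖v y - u x y‖ ^ 2) ∧
    ((∑ y, ∑ x, ((p x * q x y : ℝ≥0) : ℝ) * ‖w y - u x y‖ ^ 2 =
      ∑ y, ∑ x, ((p x * q x y : ℝ≥0) : ℝ) * ‖v y - u x y‖ ^ 2) ↔
      ∀ y, pt y ≠ 0 → w y = v y) := by
  have hpt_nonneg : ∀ y, 0 ≤ pt y := fun y =>
    hpt y ▸ sum_nonneg fun x _ => NNReal.coe_nonneg _
  have hbary : ∀ y, pt y • v y = ∑ x, ((q x y * p x : ℝ≥0) : ℝ) • u x y := fun y => by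
    by_cases hy : pt y = 0
    · rw [hy, zero_smul, sum_smul_eq_zero_of_sum_eq_zero (fun x => NNReal.coe_nonneg _)
        (hpt y ▸ hy)]
    · rw [hv y hy, smul_inv_smul₀ hy]
  have hdecomp : ∀ y, ∑ x, ((p x * q x y : ℝ≥0) : ℝ) * ‖w y - u x y‖ ^ 2 =
      ∑ x, ((p x * q x y : ℝ≥0) : ℝ) * ‖v y - u x y‖ ^ 2 + pt y * ‖w y - v y‖ ^ 2 := by
    intro y
    simp_rw [mul_comm (p _), hpt y]
    exact sum_mul_norm_sub_sq_eq_of_sum_smul_eq _ _ (hpt y ▸ hbary y) _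
  simp_rw [hdecomp, sum_add_distrib]
  have hexcess_nonneg : 0 ≤ ∑ y, pt y * ‖w y - v y‖ ^ 2 :=
    sum_nonneg fun y _ => mul_nonneg (hpt_nonneg y) (sq_nonneg _)
  refine ⟨le_add_of_nonneg_right hexcess_nonneg, ?_⟩
  rw [add_eq_left, sum_mul_norm_sq_eq_zero_iff hpt_nonneg]
  simp_rw [sub_eq_zero]

theorem cfm_minimizer {d : ℕ} {X Y : Type*} [Fintype X] [Fintype Y]
    (p : X → ℝ≥0) (hp : ∑ x, p x = 1)
    (q : X → Y → ℝ≥0) (hq : ∀ x, ∑ y, q x y = 1)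
    (u : X → Y → EuclideanSpace ℝ (Fin d))
    (pt : Y → ℝ) (hpt : ∀ y, pt y = ∑ x, ((q x y * p x : ℝ≥0) : ℝ))
    (v : Y → EuclideanSpace ℝ (Fin d))
    (hv : ∀ y, pt y ≠ 0 →
      v y = (pt y)⁻¹ • ∑ x, ((q x y * p x : ℝ≥0) : ℝ) • u x y)
    (w : Y → EuclideanSpace ℝ (Fin d)) :
    (∑ y, ∑ x, ((p x * q x y : ℝ≥0) : ℝ) * ‖w y - u x y‖ ^ 2 ≥
      ∑ y, ∑ x, ((p x * q x y : ℝ≥0) : ℝ) * ‖v y - u x y‖ ^ 2) ∧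
    ((∑ y, ∑ x, ((p x * q x y : ℝ≥0) : ℝ) * ‖w y - u x y‖ ^ 2 =
      ∑ y, ∑ x, ((p x * q x y : ℝ≥0) : ℝ) * ‖v y - u x y‖ ^ 2) ↔
      ∀ y, pt y ≠ 0 → w y = v y) :=
  cfm_minimizer_general p q u pt hpt v hv w
end

section
/- Flow matching gradient equivalence (discrete version): With X, Y finite, p : X → ℝ≥0 a pmf, q : X → Y → ℝ≥0 conditional pmfs, u : X → Y → ℝ^d, p_t(y) = ∑ x, q x y * p x, and v(y) = p_t(y)⁻¹ • ∑ x, (q x y * p x) • u x y for p_t(y) ≠ 0, the tractable objective L_CFM(w) = ∑ y ∑ x (p x * q x y) * ‖w y - u x y‖² and the marginal objective L_FM(w) = ∑ y with p_t(y)≠0, p_t(y) * ‖w y - v y‖² differ by a constant independent of w: L_CFM(w) = L_FM(w) + C where C = ∑ y ∑ x (p x * q x y) * ‖u x y‖² - ∑ y with p_t(y)≠0, p_t(y) * ‖v y‖². -/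
/-!
For each `y`, the conditional loss is a sum of squared distances from `w y` to the points
`u x y` with nonnegative weights `p x * q x y` of total mass `pt y` and barycenter `v y`.
The parallel axis (Huygens–Steiner) identity splits it into `pt y * ‖w y - v y‖²` plus a term
not involving `w`.
-/

open scoped BigOperators NNReal

theorem Finset.sum_mul_norm_sub_sq_eq {ι E : Type*} [NormedAddCommGroup E]
    [InnerProductSpace ℝ E] (s : Finset ι) (c : ι → ℝ) (u : ι → E) (m w : E)
    (hm : (∑ i ∈ s, c i) • m = ∑ i ∈ s, c i • u i) :
    ∑ i ∈ s, c i * ‖w - u i‖ ^ 2 =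
      (∑ i ∈ s, c i) * ‖w - m‖ ^ 2 +
        (∑ i ∈ s, c i * ‖u i‖ ^ 2 - (∑ i ∈ s, c i) * ‖m‖ ^ 2) := by
  have hinner : ∑ i ∈ s, c i * inner ℝ w (u i) = (∑ i ∈ s, c i) * inner ℝ w m := by
    simp_rw [← real_inner_smul_right, ← inner_sum, hm]
  calc ∑ i ∈ s, c i * ‖w - u i‖ ^ 2
      = ∑ i ∈ s, (c i * ‖w‖ ^ 2 - 2 * (c i * inner ℝ w (u i)) + c i * ‖u i‖ ^ 2) :=
        sum_congr rfl fun i _ => by rw [norm_sub_sq_real]; ring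
    _ = (∑ i ∈ s, c i) * ‖w‖ ^ 2 - 2 * ((∑ i ∈ s, c i) * inner ℝ w m) +
          ∑ i ∈ s, c i * ‖u i‖ ^ 2 := by
        rw [sum_add_distrib, sum_sub_distrib, ← sum_mul, ← mul_sum, hinner]
    _ = _ := by rw [norm_sub_sq_real]; ring

/-- At total weight `S = 0` the hypothesis `hm` says nothing (`0⁻¹ = 0`), but then nonnegative
weights all vanish. -/
theorem Finset.sum_smul_eq_sum_smul_of_nonneg {ι E : Type*} [AddCommGroup E] [Module ℝ E]
    {s : Finset ι} {c : ι → ℝ} (hc : ∀ i ∈ s, 0 ≤ c i) (u : ι → E) {m : E}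
    (hm : ∑ i ∈ s, c i ≠ 0 → m = (∑ i ∈ s, c i)⁻¹ • ∑ i ∈ s, c i • u i) :
    (∑ i ∈ s, c i) • m = ∑ i ∈ s, c i • u i := by
  by_cases hS : ∑ i ∈ s, c i = 0
  · have hc0 := (sum_eq_zero_iff_of_nonneg hc).mp hS
    rw [hS, zero_smul, sum_eq_zero fun i hi => by rw [hc0 i hi, zero_smul]]
  · rw [hm hS, smul_inv_smul₀ hS]

theorem fm_cfm_constant_gap_general {d : ℕ} {X Y : Type*} [Fintype X] [Fintype Y]
    (p : X → ℝ≥0)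
    (q : X → Y → ℝ≥0)
    (u : X → Y → EuclideanSpace ℝ (Fin d))
    (pt : Y → ℝ) (hpt : ∀ y, pt y = ∑ x, ((q x y * p x : ℝ≥0) : ℝ))
    (v : Y → EuclideanSpace ℝ (Fin d))
    (hv : ∀ y, pt y ≠ 0 →
      v y = (pt y)⁻¹ • ∑ x, ((q x y * p x : ℝ≥0) : ℝ) • u x y) :
    ∃ C : ℝ,
      C = ∑ y, ∑ x, ((p x * q x y : ℝ≥0) : ℝ) * ‖u x y‖ ^ 2 -
            ∑ y ∈ Finset.univ.filter (fun y => pt y ≠ 0), pt y * ‖v y‖ ^ 2 ∧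
      ∀ w : Y → EuclideanSpace ℝ (Fin d),
        ∑ y, ∑ x, ((p x * q x y : ℝ≥0) : ℝ) * ‖w y - u x y‖ ^ 2 =
          (∑ y ∈ Finset.univ.filter (fun y => pt y ≠ 0), pt y * ‖w y - v y‖ ^ 2) + C := by
  refine ⟨_, rfl, fun w => ?_⟩
  have hmass : ∀ y, ∑ x, ((p x * q x y : ℝ≥0) : ℝ) = pt y := fun y => by
    simp_rw [hpt, mul_comm (p _)]
  have hmean : ∀ y, pt y • v y = ∑ x, ((p x * q x y : ℝ≥0) : ℝ) • u x y := fun y => by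
    rw [← hmass]
    refine Finset.sum_smul_eq_sum_smul_of_nonneg (fun x _ => NNReal.coe_nonneg _) _ fun h => ?_
    simp_rw [hv y (hmass y ▸ h), hmass, mul_comm (p _)]
  have hdrop : ∀ f : Y → ℝ, ∑ y ∈ Finset.univ.filter (fun y => pt y ≠ 0), pt y * f y =
      ∑ y, pt y * f y := fun f => Finset.sum_filter_of_ne fun _ _ h => left_ne_zero_of_mul h
  rw [hdrop, hdrop, ← Finset.sum_sub_distrib, ← Finset.sum_add_distrib]
  refine Finset.sum_congr rfl fun y _ => ?_
  rw [Finset.sum_mul_norm_sub_sq_eq _ _ _ (v y) _ (by rw [hmass]; exact hmean y), hmass]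

theorem fm_cfm_constant_gap {d : ℕ} {X Y : Type*} [Fintype X] [Fintype Y]
    (p : X → ℝ≥0) (hp : ∑ x, p x = 1)
    (q : X → Y → ℝ≥0) (hq : ∀ x, ∑ y, q x y = 1)
    (u : X → Y → EuclideanSpace ℝ (Fin d))
    (pt : Y → ℝ) (hpt : ∀ y, pt y = ∑ x, ((q x y * p x : ℝ≥0) : ℝ))
    (v : Y → EuclideanSpace ℝ (Fin d))
    (hv : ∀ y, pt y ≠ 0 →
      v y = (pt y)⁻¹ • ∑ x, ((q x y * p x : ℝ≥0) : ℝ) • u x y) :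
    ∃ C : ℝ,
      C = ∑ y, ∑ x, ((p x * q x y : ℝ≥0) : ℝ) * ‖u x y‖ ^ 2 -
            ∑ y ∈ Finset.univ.filter (fun y => pt y ≠ 0), pt y * ‖v y‖ ^ 2 ∧
      ∀ w : Y → EuclideanSpace ℝ (Fin d),
        ∑ y, ∑ x, ((p x * q x y : ℝ≥0) : ℝ) * ‖w y - u x y‖ ^ 2 =
          (∑ y ∈ Finset.univ.filter (fun y => pt y ≠ 0), pt y * ‖w y - v y‖ ^ 2) + C :=
  fm_cfm_constant_gap_general p q u pt hpt v hv
end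

section
/- Discrete version of Theorem 2 (gradient equivalence): Let X, Y be finite, θ ∈ ℝ, p : ℝ → X → ℝ differentiable pmfs with p(θ)(x) > 0, q : X → Y → ℝ≥0 fixed conditional pmfs, u : X → Y → ℝ^d fixed conditional fields, and U : Y → ℝ^d a fixed (θ-free) field. Define p_t(θ)(y) = ∑ x, q x y * p(θ)(x) and v(θ)(y) = p_t(θ)(y)⁻¹ • ∑ x (q x y * p(θ)(x)) • u x y (assume p_t(θ)(y) > 0 for all y, θ). Then ∑ y, p_t(θ₀)(y) * ⟪-2(U y - v(θ₀)(y)), d/dθ v(θ)(y)|_{θ₀}⟫ = d/dθ [∑ x ∑ y (p(θ)(x) q x y) * 2⟪U y - v(θ₀)(y), v(θ₀)(y) - u x y⟫]|_{θ=θ₀}. -/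
/-!
Since `pt θ y • v θ y = ∑ x, (q x y * p θ x) • u x y`, summing the tractable loss over `x`
replaces `u x y` by `v θ y`: it equals `∑ y, 2 * pt θ y * ⟪U y - v θ₀ y, v θ₀ y - v θ y⟫`.
The inner factor vanishes at `θ₀`, so the product rule only differentiates `v θ y`.
-/

open scoped BigOperators NNReal RealInnerProductSpace

theorem hasDerivAt_mul_of_apply_eq_zero {f g : ℝ → ℝ} {g' θ₀ : ℝ} (hf : ContinuousAt f θ₀)
    (hg : HasDerivAt g g' θ₀) (hg₀ : g θ₀ = 0) :
    HasDerivAt (fun θ => f θ * g θ) (f θ₀ * g') θ₀ := by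
  rw [hasDerivAt_iff_tendsto_slope] at hg ⊢
  have hslope : slope (fun θ => f θ * g θ) θ₀ = fun θ => f θ * slope g θ₀ θ := by
    ext θ
    simp only [slope_def_field, hg₀, mul_zero, sub_zero, mul_div_assoc]
  rw [hslope]
  exact (hf.mono_left nhdsWithin_le_nhds).mul hg

section InnerProductSpace

variable {E : Type*} [NormedAddCommGroup E] [InnerProductSpace ℝ E]

theorem hasDerivAt_mul_inner_sub_self {f : ℝ → ℝ} {w : ℝ → E} {w' : E} {θ₀ : ℝ}
    (hf : ContinuousAt f θ₀) (hw : HasDerivAt w w' θ₀) (a : E) :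
    HasDerivAt (fun θ => f θ * ⟪a, w θ₀ - w θ⟫) (f θ₀ * ⟪a, -w'⟫) θ₀ := by
  refine hasDerivAt_mul_of_apply_eq_zero hf ?_ (by simp)
  simpa using (hasDerivAt_const θ₀ a).inner ℝ ((hasDerivAt_const θ₀ (w θ₀)).sub hw)

theorem Finset.sum_mul_inner_sub_eq {ι : Type*} (t : Finset ι) {w : ι → ℝ} {z : ι → E} {c : E}
    (hc : (∑ i ∈ t, w i) • c = ∑ i ∈ t, w i • z i) (a b : E) :
    ∑ i ∈ t, w i * ⟪a, b - z i⟫ = (∑ i ∈ t, w i) * ⟪a, b - c⟫ := by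
  simp only [inner_sub_right, mul_sub, Finset.sum_sub_distrib, ← real_inner_smul_right,
    ← inner_sum, ← Finset.sum_smul, hc]

end InnerProductSpace

theorem fgm_gradient_equivalence_general {d : ℕ} {X Y : Type*} [Fintype X] [Fintype Y]
    (p : ℝ → X → ℝ)
    (hp : ∀ x, Differentiable ℝ (fun θ => p θ x))
    (q : X → Y → ℝ≥0)
    (u : X → Y → EuclideanSpace ℝ (Fin d))
    (U : Y → EuclideanSpace ℝ (Fin d))
    (pt : ℝ → Y → ℝ) (hpt : ∀ θ y, pt θ y = ∑ x, (q x y : ℝ) * p θ x)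
    (hptpos : ∀ θ y, 0 < pt θ y)
    (v : ℝ → Y → EuclideanSpace ℝ (Fin d))
    (hv : ∀ θ y, v θ y = (pt θ y)⁻¹ • ∑ x, ((q x y : ℝ) * p θ x) • u x y)
    (θ₀ : ℝ) :
    ∑ y, pt θ₀ y * ⟪(-2 : ℝ) • (U y - v θ₀ y), deriv (fun θ => v θ y) θ₀⟫ =
      deriv (fun θ => ∑ x, ∑ y, (p θ x * (q x y : ℝ)) *
        (2 * ⟪U y - v θ₀ y, v θ₀ y - u x y⟫)) θ₀ := by
  have hpt_diff (y : Y) : Differentiable ℝ (pt · y) := by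
    simp_rw [hpt]
    fun_prop
  have hv_diff (y : Y) : Differentiable ℝ (v · y) := by
    simp_rw [hv]
    exact ((hpt_diff y).inv fun θ => (hptpos θ y).ne').smul (by fun_prop)
  have hmass (θ : ℝ) (y : Y) :
      (∑ x, (q x y : ℝ) * p θ x) • v θ y = ∑ x, ((q x y : ℝ) * p θ x) • u x y := by
    rw [← hpt, hv, smul_smul, mul_inv_cancel₀ (hptpos θ y).ne', one_smul]
  have hloss : (fun θ => ∑ x, ∑ y, (p θ x * (q x y : ℝ)) *
      (2 * ⟪U y - v θ₀ y, v θ₀ y - u x y⟫)) =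
      fun θ => ∑ y, 2 * (pt θ y * ⟪U y - v θ₀ y, v θ₀ y - v θ y⟫) := by
    ext θ
    rw [Finset.sum_comm]
    refine Finset.sum_congr rfl fun y _ => ?_
    rw [hpt, ← Finset.sum_mul_inner_sub_eq _ (hmass θ y), Finset.mul_sum]
    exact Finset.sum_congr rfl fun x _ => by ring
  have hderiv (y : Y) : HasDerivAt (fun θ => 2 * (pt θ y * ⟪U y - v θ₀ y, v θ₀ y - v θ y⟫))
      (2 * (pt θ₀ y * ⟪U y - v θ₀ y, -deriv (v · y) θ₀⟫)) θ₀ :=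
    (hasDerivAt_mul_inner_sub_self (hpt_diff y).continuous.continuousAt
      (hv_diff y θ₀).hasDerivAt _).const_mul 2
  rw [hloss, (HasDerivAt.fun_sum fun y _ => hderiv y).deriv]
  refine Finset.sum_congr rfl fun y _ => ?_
  rw [real_inner_smul_left, inner_neg_right]
  ring

theorem fgm_gradient_equivalence {d : ℕ} {X Y : Type*} [Fintype X] [Fintype Y]
    (p : ℝ → X → ℝ)
    (hp : ∀ x, Differentiable ℝ (fun θ => p θ x))
    (hppos : ∀ θ x, 0 < p θ x)
    (hpsum : ∀ θ, ∑ x, p θ x = 1)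
    (q : X → Y → ℝ≥0) (hq : ∀ x, ∑ y, q x y = 1)
    (u : X → Y → EuclideanSpace ℝ (Fin d))
    (U : Y → EuclideanSpace ℝ (Fin d))
    (pt : ℝ → Y → ℝ) (hpt : ∀ θ y, pt θ y = ∑ x, (q x y : ℝ) * p θ x)
    (hptpos : ∀ θ y, 0 < pt θ y)
    (v : ℝ → Y → EuclideanSpace ℝ (Fin d))
    (hv : ∀ θ y, v θ y = (pt θ y)⁻¹ • ∑ x, ((q x y : ℝ) * p θ x) • u x y)
    (θ₀ : ℝ) :
    ∑ y, pt θ₀ y * ⟪(-2 : ℝ) • (U y - v θ₀ y), deriv (fun θ => v θ y) θ₀⟫ =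
      deriv (fun θ => ∑ x, ∑ y, (p θ x * (q x y : ℝ)) *
        (2 * ⟪U y - v θ₀ y, v θ₀ y - u x y⟫)) θ₀ :=
  fgm_gradient_equivalence_general p hp q u U pt hpt hptpos v hv θ₀
end
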